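/- arXiv:2210.11570 — 11 statements merged into one kernel-verified Lean document; each statement's English description precedes it below -/
import Mathlib

section
/- Let b be a real number with 0 < b < 1 and let y : [b, 1] → ℝ be a monotone nonincreasing function with y(b) = 1 and y(1) = 0 that satisfies the invariance equation y(w) = y(w/w') + 1 − y(b/w') for all real numbers w, w' with b ≤ w ≤ w' ≤ 1. Then y(w) = log w / log b for every w ∈ [b, 1]. -/
/-!
Writing `g u = y (b ^ u)`, the invariance equation at `w = w'` gives `y (b / w') = 1 - y w'`,
and substituting this back turns it into `y w = y (w / w') + y w'`, i.e. Cauchy's equation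
`g (u + v) = g u + g v` on `[0, 1]`. A monotone solution with `g 1 = 1` agrees with the identity
at every rational point of `[0, 1]`, hence everywhere by density, so
`y w = g (logb b w) = logb b w`.
-/

open Real Set

section UnitIntervalCauchy

variable {g : ℝ → ℝ}
  (hadd : ∀ u v : ℝ, 0 ≤ u → 0 ≤ v → u + v ≤ 1 → g (u + v) = g u + g v)
include hadd

theorem apply_zero_of_add : g 0 = 0 := by
  have h := hadd 0 0 le_rfl le_rfl (by norm_num)
  rw [add_zero] at h
  linarith

theorem apply_natCast_div_of_add {k n : ℕ} (hkn : k ≤ n) : g (k / n) = k * g (1 / n) := by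
  induction k with
  | zero => simpa only [CharP.cast_eq_zero, zero_div, zero_mul] using apply_zero_of_add hadd
  | succ k ih =>
    have hsplit : ((k + 1 : ℕ) : ℝ) / n = k / n + 1 / n := by push_cast; ring
    have hle : ((k + 1 : ℕ) : ℝ) / n ≤ 1 :=
      div_le_one_of_le₀ (by exact_mod_cast hkn) n.cast_nonneg
    rw [hsplit] at hle ⊢
    rw [hadd _ _ (by positivity) (by positivity) hle, ih (by omega)]
    push_cast
    ring

theorem apply_ratCast_of_add (h1 : g 1 = 1) {q : ℚ} (hq0 : (0 : ℝ) ≤ q)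
    (hq1 : (q : ℝ) ≤ 1) : g q = q := by
  have hden : (0 : ℝ) < q.den := by exact_mod_cast q.den_pos
  have hunit : g (1 / q.den) = 1 / q.den := by
    have h := apply_natCast_div_of_add hadd (le_refl q.den)
    rw [div_self hden.ne', h1] at h
    field_simp
    linarith
  have hq : (q : ℝ) = (q.num.toNat : ℕ) / (q.den : ℕ) := by
    rw [Rat.cast_def]
    congr 1
    have hnum : 0 ≤ q.num := Rat.num_nonneg.mpr (by exact_mod_cast hq0)
    exact_mod_cast (Int.toNat_of_nonneg hnum).symm
  have hkn : q.num.toNat ≤ q.den := by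
    rw [hq, div_le_one hden] at hq1
    exact_mod_cast hq1
  rw [hq, apply_natCast_div_of_add hadd hkn, hunit]
  ring

theorem eqOn_id_of_monotoneOn_of_add (hmono : MonotoneOn g (Icc 0 1)) (h1 : g 1 = 1) :
    EqOn g id (Icc 0 1) := by
  intro u hu
  rcases lt_trichotomy (g u) u with hlt | heq | hgt
  · obtain ⟨q, hgq, hqu⟩ := exists_rat_btwn hlt
    have hg0 : 0 ≤ g u := apply_zero_of_add hadd ▸ hmono ⟨le_rfl, zero_le_one⟩ hu hu.1
    have hq : (q : ℝ) ∈ Icc 0 1 := ⟨by linarith, by linarith [hu.2]⟩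
    have hgqu := hmono hq hu hqu.le
    rw [apply_ratCast_of_add hadd h1 hq.1 hq.2] at hgqu
    linarith
  · exact heq
  · obtain ⟨q, huq, hqg⟩ := exists_rat_btwn hgt
    have hg1 : g u ≤ 1 := h1 ▸ hmono hu ⟨zero_le_one, le_rfl⟩ hu.2
    have hq : (q : ℝ) ∈ Icc 0 1 := ⟨by linarith [hu.1], by linarith⟩
    have hguq := hmono hu hq huq.le
    rw [apply_ratCast_of_add hadd h1 hq.1 hq.2] at hguq
    linarith

end UnitIntervalCauchy

section Invariance

variable {b : ℝ} {y : ℝ → ℝ}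

theorem apply_eq_apply_div_add_apply (hb0 : 0 < b) (hy1 : y 1 = 0)
    (hinv : ∀ w w' : ℝ, b ≤ w → w ≤ w' → w' ≤ 1 → y w = y (w / w') + 1 - y (b / w'))
    {w w' : ℝ} (hw : b ≤ w) (hww' : w ≤ w') (hw' : w' ≤ 1) : y w = y (w / w') + y w' := by
  have hdiag := hinv w' w' (hw.trans hww') le_rfl hw'
  rw [div_self (hb0.trans_le (hw.trans hww')).ne', hy1] at hdiag
  linarith [hinv w w' hw hww' hw']

theorem rpow_mem_Icc_of_mem_Icc (hb0 : 0 < b) (hb1 : b < 1) {u : ℝ} (hu : u ∈ Icc 0 1) :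
    b ^ u ∈ Icc b 1 :=
  ⟨by simpa only [rpow_one] using rpow_le_rpow_of_exponent_ge hb0 hb1.le hu.2,
    rpow_le_one hb0.le hb1.le hu.1⟩

theorem apply_rpow_add_of_apply_eq_apply_div_add_apply (hb0 : 0 < b) (hb1 : b < 1)
    (hadd : ∀ w w' : ℝ, b ≤ w → w ≤ w' → w' ≤ 1 → y w = y (w / w') + y w')
    {u v : ℝ} (hu : 0 ≤ u) (hv : 0 ≤ v) (huv : u + v ≤ 1) :
    y (b ^ (u + v)) = y (b ^ u) + y (b ^ v) := by
  have hsum := rpow_mem_Icc_of_mem_Icc hb0 hb1 ⟨add_nonneg hu hv, huv⟩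
  have hle : b ^ (u + v) ≤ b ^ v := rpow_le_rpow_of_exponent_ge hb0 hb1.le (by linarith)
  have hv1 : b ^ v ≤ 1 := rpow_le_one hb0.le hb1.le hv
  rw [hadd _ _ hsum.1 hle hv1, rpow_add hb0, mul_div_cancel_right₀ _ (rpow_pos_of_pos hb0 v).ne']

end Invariance

/-- Proposition 3.2(i): a nonincreasing quantile function on `[b,1]` with `y b = 1`,
`y 1 = 0` satisfying the scale-invariance/greedy-buyback invariance equation must be
the canonical quantile function `w ↦ log w / log b`. -/
theorem stmt_0 (b : ℝ) (hb0 : 0 < b) (hb1 : b < 1) (y : ℝ → ℝ)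
    (hmono : ∀ w w' : ℝ, b ≤ w → w ≤ w' → w' ≤ 1 → y w' ≤ y w)
    (hyb : y b = 1) (hy1 : y 1 = 0)
    (hinv : ∀ w w' : ℝ, b ≤ w → w ≤ w' → w' ≤ 1 →
      y w = y (w / w') + 1 - y (b / w')) :
    ∀ w : ℝ, b ≤ w → w ≤ 1 → y w = Real.log w / Real.log b := by
  have hid : EqOn (fun u => y (b ^ u)) id (Icc 0 1) := by
    refine eqOn_id_of_monotoneOn_of_add (fun u v hu hv huv => ?_) (fun u hu v hv huv => ?_) ?_
    · exact apply_rpow_add_of_apply_eq_apply_div_add_apply hb0 hb1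
        (fun w w' => apply_eq_apply_div_add_apply hb0 hy1 hinv) hu hv huv
    · exact hmono _ _ (rpow_mem_Icc_of_mem_Icc hb0 hb1 hv).1
        (rpow_le_rpow_of_exponent_ge hb0 hb1.le huv) (rpow_mem_Icc_of_mem_Icc hb0 hb1 hu).2
    · simpa only [rpow_one] using hyb
  intro w hbw hw1
  have hw0 : 0 < w := hb0.trans_le hbw
  have hlog : logb b w ∈ Icc 0 1 :=
    ⟨logb_nonneg_of_base_lt_one hb0 hb1 hw0 hw1,
      (logb_self_eq_one_iff.2 ⟨hb0.ne', hb1.ne, by linarith⟩).symm ▸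
        (logb_le_logb_of_base_lt_one hb0 hb1 hw0 hb0).2 hbw⟩
  simpa only [rpow_logb hb0 hb1.ne hw0, log_div_log] using (hid hlog).trans (id_eq _)
end

section
/- For every real number f ≥ 0 there exists a unique real number ŵ ≥ 1 satisfying ŵ = (1 + f)·(log ŵ + 1). Moreover, this solution ŵ satisfies ŵ ≥ e if and only if f ≥ (e − 2)/2. -/
/-!
On `[1, ∞)` the equation `w = (1 + f)(log w + 1)` says `w / (log w + 1) = 1 + f`. The map
`w ↦ w / (log w + 1)` is continuous, strictly increasing (because `log (b / a) < b / a - 1`),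
equals `1` at `w = 1` and `e / 2` at `w = e`, and is at least `√w / 2`, so it tends to `∞`.
Hence it takes every value `1 + f ≥ 1` exactly once, and the solution is `≥ e` iff
`1 + f ≥ e / 2`.
-/

open Real Set Filter

noncomputable def divLogAddOne (w : ℝ) : ℝ := w / (log w + 1)

lemma log_add_one_pos_of_one_le {w : ℝ} (hw : 1 ≤ w) : 0 < log w + 1 := by
  linarith [log_nonneg hw]

lemma divLogAddOne_one : divLogAddOne 1 = 1 := by
  simp [divLogAddOne]

lemma divLogAddOne_exp_one : divLogAddOne (exp 1) = exp 1 / 2 := by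
  rw [divLogAddOne, log_exp, one_add_one_eq_two]

lemma divLogAddOne_eq_iff {w : ℝ} (hw : 1 ≤ w) (c : ℝ) :
    divLogAddOne w = c ↔ w = c * (log w + 1) :=
  div_eq_iff (log_add_one_pos_of_one_le hw).ne'

lemma continuousOn_divLogAddOne : ContinuousOn divLogAddOne (Ici 1) := by
  refine continuousOn_id.div ?_ fun w hw => (log_add_one_pos_of_one_le hw).ne'
  exact (continuousOn_log.mono fun w (hw : 1 ≤ w) => (zero_lt_one.trans_le hw).ne').add
    continuousOn_const

lemma strictMonoOn_divLogAddOne : StrictMonoOn divLogAddOne (Ici 1) := by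
  intro a (ha : 1 ≤ a) b (hb : 1 ≤ b) hab
  have ha0 : 0 < a := by linarith
  rw [divLogAddOne, divLogAddOne,
    div_lt_div_iff₀ (log_add_one_pos_of_one_le ha) (log_add_one_pos_of_one_le hb)]
  have hquot : log (b / a) < b / a - 1 :=
    log_lt_sub_one_of_pos (by positivity) (by rw [Ne, div_eq_one_iff_eq ha0.ne']; exact hab.ne')
  rw [log_div (by positivity) ha0.ne'] at hquot
  have hgap : a * (log b - log a) < b - a := by
    have := mul_lt_mul_of_pos_left hquot ha0
    rwa [mul_sub a (b / a), mul_div_cancel₀ b ha0.ne', mul_one] at this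
  nlinarith [log_nonneg ha]

lemma sqrt_div_two_le_divLogAddOne {w : ℝ} (hw : 1 ≤ w) : √w / 2 ≤ divLogAddOne w := by
  have hsqrt : 0 < √w := sqrt_pos.2 (by linarith)
  have hlog : log w + 1 ≤ 2 * √w := by
    have := log_le_sub_one_of_pos hsqrt
    rw [log_sqrt (by linarith)] at this
    linarith
  rw [divLogAddOne, le_div_iff₀ (log_add_one_pos_of_one_le hw)]
  calc √w / 2 * (log w + 1) ≤ √w / 2 * (2 * √w) := by gcongr
    _ = w := by rw [← mul_assoc, div_mul_cancel₀ _ two_ne_zero, mul_self_sqrt (by linarith)]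

lemma tendsto_divLogAddOne_atTop : Tendsto divLogAddOne atTop atTop :=
  tendsto_atTop_mono' atTop
    (eventually_ge_atTop 1 |>.mono fun _ hw => sqrt_div_two_le_divLogAddOne hw)
    (tendsto_sqrt_atTop.atTop_div_const two_pos)

/-- For every `f ≥ 0` there is a unique `wh ≥ 1` with `wh = (1+f)(log wh + 1)`, and this
solution satisfies `wh ≥ e` iff `f ≥ (e-2)/2`. -/
theorem stmt_2 (f : ℝ) (hf : 0 ≤ f) :
    (∃! wh : ℝ, 1 ≤ wh ∧ wh = (1 + f) * (Real.log wh + 1)) ∧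
    (∀ wh : ℝ, 1 ≤ wh → wh = (1 + f) * (Real.log wh + 1) →
      (Real.exp 1 ≤ wh ↔ (Real.exp 1 - 2) / 2 ≤ f)) := by
  have hc : 1 + f ∈ Ici (divLogAddOne 1) := by
    rw [divLogAddOne_one, mem_Ici]
    linarith
  obtain ⟨w, hw1, hwf⟩ :=
    intermediate_value_Ici continuousOn_divLogAddOne tendsto_divLogAddOne_atTop hc
  refine ⟨⟨w, ⟨hw1, (divLogAddOne_eq_iff hw1 _).1 hwf⟩, fun y ⟨hy1, hy⟩ => ?_⟩, ?_⟩
  · exact strictMonoOn_divLogAddOne.injOn hy1 hw1 ((divLogAddOne_eq_iff hy1 _).2 hy ▸ hwf.symm)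
  · intro wh hwh1 hwh
    rw [← strictMonoOn_divLogAddOne.le_iff_le (one_le_exp zero_le_one) hwh1,
      divLogAddOne_exp_one, (divLogAddOne_eq_iff hwh1 _).2 hwh]
    constructor <;> intro <;> linarith
end

section
/- Let f ≥ 0 and let ŵ* be the unique real number ŵ ≥ 1 satisfying ŵ = (1 + f)·(log ŵ + 1). Then for every real w > 1 + f, (w · log w)/(w − (1 + f)) ≥ log ŵ* + 1. If moreover f > 0, equality holds if and only if w = ŵ*. -/
/-! The fixed-point equation `ŵ* = (1 + f)(log ŵ* + 1)` says exactly that the tangent line of the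
strictly convex function `w ↦ w log w` at `ŵ*`, namely `w ↦ (log ŵ* + 1) w - ŵ*`, equals
`(log ŵ* + 1)(w - (1 + f))`. Dividing the tangent-line inequality by `w - (1 + f) > 0` gives the
bound, and strict convexity gives equality only at the point of tangency. -/

namespace Real

variable {s w : ℝ}

theorem tangent_lt_mul_log (hs : 0 < s) (hw : 0 < w) (hne : w ≠ s) :
    (log s + 1) * w - s < w * log w := by
  have hne' : s / w ≠ 1 := fun h => hne ((div_eq_one_iff_eq hw.ne').mp h).symm
  have h := log_lt_sub_one_of_pos (div_pos hs hw) hne'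
  rw [log_div hs.ne' hw.ne'] at h
  have h' := mul_lt_mul_of_pos_left h hw
  rw [mul_sub w (s / w), mul_div_cancel₀ s hw.ne'] at h'
  linarith

theorem tangent_le_mul_log (hs : 0 < s) (hw : 0 < w) : (log s + 1) * w - s ≤ w * log w := by
  rcases eq_or_ne w s with rfl | hne
  · exact (by ring : (log w + 1) * w - w = w * log w).le
  · exact (tangent_lt_mul_log hs hw hne).le

variable {a : ℝ}

theorem log_add_one_le_mul_log_div_sub (hs : 0 < s) (hsa : s = a * (log s + 1)) (hw : 0 < w)
    (haw : a < w) : log s + 1 ≤ w * log w / (w - a) := by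
  rw [le_div_iff₀ (sub_pos.mpr haw)]
  linarith [tangent_le_mul_log hs hw]

theorem mul_log_div_sub_eq_log_add_one_iff (hs : 0 < s) (hsa : s = a * (log s + 1))
    (hw : 0 < w) (haw : a < w) : w * log w / (w - a) = log s + 1 ↔ w = s := by
  rw [div_eq_iff (sub_pos.mpr haw).ne']
  constructor
  · intro heq
    by_contra hne
    linarith [tangent_lt_mul_log hs hw hne]
  · rintro rfl
    linarith

end Real

/-- The competitive-ratio expression `w log w / (w - (1+f))` attains its minimum over
`w > 1 + f` at the solution `wh*` of `wh = (1+f)(log wh + 1)`, with minimum value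
`log wh* + 1`; for `f > 0` equality holds exactly at `w = wh*`. -/
theorem stmt_4 (f whStar : ℝ) (hf : 0 ≤ f) (hwh1 : 1 ≤ whStar)
    (hwh : whStar = (1 + f) * (Real.log whStar + 1)) :
    (∀ w : ℝ, 1 + f < w →
      Real.log whStar + 1 ≤ (w * Real.log w) / (w - (1 + f))) ∧
    (0 < f → ∀ w : ℝ, 1 + f < w →
      ((w * Real.log w) / (w - (1 + f)) = Real.log whStar + 1 ↔ w = whStar)) := by
  have hs : 0 < whStar := by linarith
  refine ⟨fun w hw => ?_, fun _ w hw => ?_⟩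
  · exact Real.log_add_one_le_mul_log_div_sub hs hwh (by linarith) hw
  · exact Real.mul_log_div_sub_eq_log_add_one_iff hs hwh (by linarith) hw
end

section
/- Let λ > 1 and τ ≥ 0 be real numbers, and define Ψ(y) = τ·(λ^y − 1) and ψ(y) = τ·(log λ)·λ^y for y ∈ [0, 1]. Let 0 ≤ w' ≤ w be reals and let y : [0, ∞) → [0, 1] be a measurable function with y(t) = 1 for almost every t ∈ [0, w'] and with ∫₀^∞ Ψ(y(t)) dt finite. Then (log λ)·(w − ∫₀^∞ Ψ(y(t)) dt) + ∫_{w'}^{w} ψ(y(t)) dt ≤ (τ + 1)·(log λ)·w − τ·λ·(log λ)·w'. Moreover, if additionally τ·(λ − 1) ≥ 1 + f for some f ≥ 0 and w ≥ ∫₀^∞ Ψ(y(t)) dt, then w ≥ (1 + f)·w'. -/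
/-!
Write `Ψ(y) = τ(λ^y - 1) ≥ 0`, so that `ψ(y) = (log λ)(Ψ(y) + τ)`. Since `y = 1` on `[0, w']`,
the total penalty `∫₀^∞ Ψ(y)` is at least `τ(λ - 1)w' + ∫_{w'}^{w} Ψ(y)`; the `∫_{w'}^{w} Ψ(y)` terms
then cancel in the dual increment, leaving `(τ + 1)(log λ)w - τλ(log λ)w'`. The same lower bound on
the total penalty gives `w ≥ τ(λ - 1)w' ≥ (1 + f)w'`.
-/

open MeasureTheory Set

section IntervalIntegral

variable {g : ℝ → ℝ} {a b d c : ℝ}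

lemma intervalIntegrable_of_integrableOn_Ioi (hab : a ≤ b) (hbd : b ≤ d)
    (hint : IntegrableOn g (Ioi a)) : IntervalIntegrable g volume b d :=
  (intervalIntegrable_iff_integrableOn_Ioc_of_le hbd).2 <|
    hint.mono_set fun _ ht => hab.trans_lt ht.1

lemma intervalIntegral_le_setIntegral_Ioi (hab : a ≤ b) (hint : IntegrableOn g (Ioi a))
    (hg : ∀ t ∈ Ioi a, 0 ≤ g t) : ∫ t in a..b, g t ≤ ∫ t in Ioi a, g t := by
  rw [intervalIntegral.integral_of_le hab]
  exact setIntegral_mono_set hint (ae_restrict_of_forall_mem measurableSet_Ioi hg)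
    Ioc_subset_Ioi_self.eventuallyLE

lemma intervalIntegral_eq_of_ae_eq_const (hab : a ≤ b)
    (hconst : ∀ᵐ t : ℝ, t ∈ Icc a b → g t = c) : ∫ t in a..b, g t = c * (b - a) := by
  have hcongr : ∀ᵐ t : ℝ, t ∈ uIoc a b → g t = c := by
    filter_upwards [hconst] with t ht hmem
    exact ht (Ioc_subset_Icc_self (uIoc_of_le hab ▸ hmem))
  rw [intervalIntegral.integral_congr_ae hcongr, intervalIntegral.integral_const, smul_eq_mul,
    mul_comm]

lemma const_mul_add_setIntegral_le_setIntegral_Ioi (hab : a ≤ b) (hbd : b ≤ d)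
    (hint : IntegrableOn g (Ioi a)) (hg : ∀ t ∈ Ioi a, 0 ≤ g t)
    (hconst : ∀ᵐ t : ℝ, t ∈ Icc a b → g t = c) :
    c * (b - a) + ∫ t in b..d, g t ≤ ∫ t in Ioi a, g t := by
  rw [← intervalIntegral_eq_of_ae_eq_const hab hconst,
    intervalIntegral.integral_add_adjacent_intervals
      (intervalIntegrable_of_integrableOn_Ioi le_rfl hab hint)
      (intervalIntegrable_of_integrableOn_Ioi hab hbd hint)]
  exact intervalIntegral_le_setIntegral_Ioi (hab.trans hbd) hint hg

lemma intervalIntegral_const_mul_add_const (hg : IntervalIntegrable g volume a b) (k : ℝ) :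
    ∫ t in a..b, (k * g t + c) = k * (∫ t in a..b, g t) + c * (b - a) := by
  rw [intervalIntegral.integral_add (hg.const_mul k) intervalIntegrable_const,
    intervalIntegral.integral_const_mul, intervalIntegral.integral_const, smul_eq_mul, mul_comm c]

end IntervalIntegral

lemma expPenalty_nonneg {lam τ x : ℝ} (hlam : 1 ≤ lam) (hτ : 0 ≤ τ) (hx : 0 ≤ x) :
    0 ≤ τ * (lam ^ x - 1) :=
  mul_nonneg hτ (sub_nonneg.2 (Real.one_le_rpow hlam hx))

theorem stmt_5_general (lam τ f w w' : ℝ) (hlam : 1 < lam) (hτ : 0 ≤ τ)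
    (hw' : 0 ≤ w') (hww' : w' ≤ w)
    (y : ℝ → ℝ)
    (hy_mem : ∀ t : ℝ, y t ∈ Set.Icc (0 : ℝ) 1)
    (hy_one : ∀ᵐ t : ℝ, t ∈ Set.Icc (0 : ℝ) w' → y t = 1)
    (hint : IntegrableOn (fun t => τ * (lam ^ (y t) - 1)) (Set.Ioi (0 : ℝ))) :
    (Real.log lam * (w - ∫ t in Set.Ioi (0 : ℝ), τ * (lam ^ (y t) - 1))
        + ∫ t in w'..w, τ * Real.log lam * lam ^ (y t)
      ≤ (τ + 1) * Real.log lam * w - τ * lam * Real.log lam * w') ∧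
    (0 ≤ f → 1 + f ≤ τ * (lam - 1) →
      (∫ t in Set.Ioi (0 : ℝ), τ * (lam ^ (y t) - 1)) ≤ w →
      (1 + f) * w' ≤ w) := by
  have hlog : 0 < Real.log lam := Real.log_pos hlam
  have hΨ_nonneg (t : ℝ) : 0 ≤ τ * (lam ^ (y t) - 1) :=
    expPenalty_nonneg hlam.le hτ (hy_mem t).1
  have hΨ_const : ∀ᵐ t : ℝ, t ∈ Icc 0 w' → τ * (lam ^ (y t) - 1) = τ * (lam - 1) := by
    filter_upwards [hy_one] with t ht hmem
    rw [ht hmem, Real.rpow_one]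
  have hkey := const_mul_add_setIntegral_le_setIntegral_Ioi hw' hww' hint
    (fun t _ => hΨ_nonneg t) hΨ_const
  have hψ : ∫ t in w'..w, τ * Real.log lam * lam ^ (y t)
      = Real.log lam * (∫ t in w'..w, τ * (lam ^ (y t) - 1)) + τ * Real.log lam * (w - w') := by
    rw [← intervalIntegral_const_mul_add_const (c := τ * Real.log lam)
      (intervalIntegrable_of_integrableOn_Ioi hw' hww' hint)]
    congr 1 with t
    ring
  have hJ : 0 ≤ ∫ t in w'..w, τ * (lam ^ (y t) - 1) :=
    intervalIntegral.integral_nonneg hww' fun t _ => hΨ_nonneg t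
  refine ⟨?_, fun _ hfτ hIw => ?_⟩
  · rw [hψ]
    linarith [mul_le_mul_of_nonneg_left hkey hlog.le]
  · linarith [mul_le_mul_of_nonneg_right hfτ hw']

/-- Key dual-increment computation in Step (ii) of the proof of Theorem 4.1, with the
generalized exponential penalty `Ψ(y) = τ(λ^y - 1)` and its derivative
`ψ(y) = τ (log λ) λ^y`. -/
theorem stmt_5 (lam τ f w w' : ℝ) (hlam : 1 < lam) (hτ : 0 ≤ τ)
    (hw' : 0 ≤ w') (hww' : w' ≤ w)
    (y : ℝ → ℝ) (hy_meas : Measurable y)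
    (hy_mem : ∀ t : ℝ, y t ∈ Set.Icc (0 : ℝ) 1)
    (hy_one : ∀ᵐ t : ℝ, t ∈ Set.Icc (0 : ℝ) w' → y t = 1)
    (hint : IntegrableOn (fun t => τ * (lam ^ (y t) - 1)) (Set.Ioi (0 : ℝ))) :
    (Real.log lam * (w - ∫ t in Set.Ioi (0 : ℝ), τ * (lam ^ (y t) - 1))
        + ∫ t in w'..w, τ * Real.log lam * lam ^ (y t)
      ≤ (τ + 1) * Real.log lam * w - τ * lam * Real.log lam * w') ∧
    (0 ≤ f → 1 + f ≤ τ * (lam - 1) →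
      (∫ t in Set.Ioi (0 : ℝ), τ * (lam ^ (y t) - 1)) ≤ w →
      (1 + f) * w' ≤ w) :=
  stmt_5_general lam τ f w w' hlam hτ hw' hww' y hy_mem hy_one hint
end

section
/- Let f ≥ 1/3 be a real number and set τ = 1 + f + √(f(1 + f)). Then τ > 1 + f, and for every real w ≥ τ, ((τ + 1)·w − 2τ)/(w − (1 + f)) ≤ 1 + 2f + 2·√(f(1 + f)). -/
/-! Writing `c = 1 + f` and `τ = c + s` with `s² = c (c - 1)`, the margin in the bound is
`(2τ - 1)(w - c) - ((τ + 1) w - 2τ) = (τ - 2)(w - τ) + ((τ - c)² - c (c - 1)) = (τ - 2)(w - τ)`,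
which is nonnegative for `w ≥ τ` as soon as `τ ≥ 2`, i.e. `s ≥ 1 - f`; and `s² ≥ (1 - f)²`
is exactly `3f ≥ 1`. -/

open Real

theorem one_sub_le_sqrt_mul_one_add {f : ℝ} (hf : 1 / 3 ≤ f) : 1 - f ≤ √(f * (1 + f)) :=
  le_sqrt_of_sq_le (by nlinarith)

theorem div_sub_le_two_mul_sub_one {c τ w : ℝ} (hτc : (τ - c) ^ 2 = c * (c - 1))
    (hτ : 2 ≤ τ) (hcτ : c < τ) (hw : τ ≤ w) :
    ((τ + 1) * w - 2 * τ) / (w - c) ≤ 2 * τ - 1 := by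
  rw [div_le_iff₀ (by linarith)]
  linear_combination mul_nonneg (sub_nonneg.2 hτ) (sub_nonneg.2 hw) - hτc

/-- Corollary 5.3 (deterministic integral, large buyback cost regime): with
`τ = 1 + f + √(f(1+f))` and `f ≥ 1/3`, we have `τ > 1 + f`, and for every `w ≥ τ`,
`((τ+1)w - 2τ)/(w-(1+f)) ≤ 1 + 2f + 2√(f(1+f))`. -/
theorem stmt_9 (f τ : ℝ) (hf : 1 / 3 ≤ f)
    (hτ : τ = 1 + f + Real.sqrt (f * (1 + f))) :
    1 + f < τ ∧
    ∀ w : ℝ, τ ≤ w →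
      ((τ + 1) * w - 2 * τ) / (w - (1 + f))
        ≤ 1 + 2 * f + 2 * Real.sqrt (f * (1 + f)) := by
  have hprod : 0 < f * (1 + f) := by positivity
  have hsq : √(f * (1 + f)) ^ 2 = (1 + f) * (1 + f - 1) := by
    rw [sq_sqrt hprod.le]; ring
  have hlt : 1 + f < τ := by rw [hτ]; linarith [sqrt_pos.2 hprod]
  refine ⟨hlt, fun w hw => ?_⟩
  calc ((τ + 1) * w - 2 * τ) / (w - (1 + f))
      ≤ 2 * τ - 1 :=
        div_sub_le_two_mul_sub_one (by rw [hτ, add_sub_cancel_left]; exact hsq)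
          (by rw [hτ]; linarith [one_sub_le_sqrt_mul_one_add hf]) hlt hw
    _ = 1 + 2 * f + 2 * √(f * (1 + f)) := by rw [hτ]; ring
end

section
/- For each integer i ≥ 2, define pre(i) as the largest positive integer i' ≤ i such that the sum of 1/ℓ over integers ℓ with i' ≤ ℓ ≤ i is strictly greater than 1. Then pre(i)/i converges to 1/e as i → ∞. -/
/-!
Comparing `1/ℓ` with `log ℓ - log (ℓ - 1)` and `log (ℓ + 1) - log ℓ` shows that the tail sum
`∑_{ℓ=a}^{b} 1/ℓ` lies between `log ((b + 1) / a)` and `log (b / (a - 1))`. The tail starting at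
`pre(i)` exceeds `1` while the one starting at `pre(i) + 1` does not, which pins `pre(i)` to within
`1` of `i / e`.
-/

open Real Finset Filter Topology

lemma log_add_one_sub_log_le_inv {x : ℝ} (hx : 0 < x) : log (x + 1) - log x ≤ x⁻¹ := by
  have h := log_le_sub_one_of_pos (x := (x + 1) / x) (by positivity)
  rwa [log_div (by positivity) hx.ne', add_div, div_self hx.ne', one_div, add_sub_cancel_left] at h

lemma inv_le_log_sub_log_sub_one {x : ℝ} (hx : 1 < x) : x⁻¹ ≤ log x - log (x - 1) := by
  have h := one_sub_inv_le_log_of_pos (x := x / (x - 1)) (by apply div_pos <;> linarith)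
  rwa [log_div (by positivity) (by linarith), inv_div, sub_div, div_self (by positivity),
    sub_sub_cancel, one_div] at h

lemma log_sub_log_le_sum_Icc_inv {a b : ℕ} (ha : 1 ≤ a) (hab : a ≤ b) :
    log (b + 1) - log a ≤ ∑ ℓ ∈ Icc a b, (ℓ : ℝ)⁻¹ := by
  induction b, hab using Nat.le_induction with
  | base => simpa using log_add_one_sub_log_le_inv (x := a) (by positivity)
  | succ b hab ih =>
    rw [sum_Icc_succ_top (by omega)]
    have := log_add_one_sub_log_le_inv (x := (b + 1 : ℕ)) (by positivity)
    push_cast at this ⊢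
    linarith

lemma sum_Icc_inv_le_log_sub_log {a b : ℕ} (ha : 2 ≤ a) (hab : a ≤ b) :
    ∑ ℓ ∈ Icc a b, (ℓ : ℝ)⁻¹ ≤ log b - log (a - 1) := by
  induction b, hab using Nat.le_induction with
  | base => simpa using inv_le_log_sub_log_sub_one (x := a) (by exact_mod_cast ha)
  | succ b hab ih =>
    rw [sum_Icc_succ_top (by omega)]
    have := inv_le_log_sub_log_sub_one (x := (b + 1 : ℕ)) (by norm_cast; omega)
    push_cast at this ⊢
    rw [add_sub_cancel_right] at this
    linarith

lemma add_one_le_exp_one_mul_of_sum_Icc_inv_le_one {a b : ℕ} (ha : 1 ≤ a) (hab : a ≤ b)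
    (h : ∑ ℓ ∈ Icc a b, (ℓ : ℝ)⁻¹ ≤ 1) : (b + 1 : ℝ) ≤ exp 1 * a := by
  have hlog : log (b + 1) ≤ 1 + log a := by
    linarith [log_sub_log_le_sum_Icc_inv ha hab]
  calc (b + 1 : ℝ) = exp (log (b + 1)) := (exp_log (by positivity)).symm
    _ ≤ exp (1 + log a) := exp_le_exp.mpr hlog
    _ = exp 1 * a := by rw [exp_add, exp_log (by positivity)]

lemma exp_one_mul_sub_one_lt_of_one_lt_sum_Icc_inv {a b : ℕ} (ha : 2 ≤ a) (hab : a ≤ b)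
    (h : 1 < ∑ ℓ ∈ Icc a b, (ℓ : ℝ)⁻¹) : exp 1 * (a - 1) < b := by
  have ha' : (1 : ℝ) < a := by exact_mod_cast ha
  have hlog : 1 + log (a - 1) < log b := by
    linarith [sum_Icc_inv_le_log_sub_log ha hab]
  calc exp 1 * (a - 1) = exp (1 + log (a - 1)) := by rw [exp_add, exp_log (by linarith)]
    _ < exp (log b) := exp_lt_exp.mpr hlog
    _ = b := exp_log (by linarith [(Nat.cast_le (α := ℝ)).mpr hab])

lemma abs_sub_div_exp_one_le_one_of_isGreatest {i p : ℕ}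
    (hp : IsGreatest {i' : ℕ | 1 ≤ i' ∧ i' ≤ i ∧ 1 < ∑ ℓ ∈ Icc i' i, (ℓ : ℝ)⁻¹} p) :
    |(p : ℝ) - i / exp 1| ≤ 1 := by
  obtain ⟨⟨hp1, hpi_le, hsum⟩, hmax⟩ := hp
  have hpi : p < i := by
    refine lt_of_le_of_ne hpi_le fun hpi ↦ ?_
    subst hpi
    rw [Icc_self, sum_singleton] at hsum
    exact hsum.not_ge (inv_le_one_of_one_le₀ (by exact_mod_cast hp1))
  have hnext : ∑ ℓ ∈ Icc (p + 1) i, (ℓ : ℝ)⁻¹ ≤ 1 :=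
    not_lt.mp fun h ↦ (hmax ⟨by omega, hpi, h⟩).not_gt (Nat.lt_succ_self p)
  have he := exp_pos 1
  have hlower := add_one_le_exp_one_mul_of_sum_Icc_inv_le_one (by omega) hpi hnext
  have hupper : exp 1 * (p - 1) ≤ i := by
    rcases Nat.lt_or_ge p 2 with hp2 | hp2
    · have : (p : ℝ) ≤ 1 := by exact_mod_cast Nat.lt_succ_iff.mp hp2
      nlinarith
    · exact (exp_one_mul_sub_one_lt_of_one_lt_sum_Icc_inv hp2 hpi.le hsum).le
  push_cast at hlower
  rw [abs_le]
  constructor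
  · have : (i : ℝ) / exp 1 ≤ p + 1 := by rw [div_le_iff₀ he]; linarith
    linarith
  · have : (p : ℝ) - 1 ≤ i / exp 1 := by rw [le_div_iff₀ he]; linarith
    linarith

lemma tendsto_div_natCast_of_abs_sub_mul_le {f : ℕ → ℝ} {c C : ℝ}
    (h : ∀ᶠ n in atTop, |f n - c * n| ≤ C) :
    Tendsto (fun n ↦ f n / n) atTop (𝓝 c) := by
  rw [← tendsto_sub_nhds_zero_iff]
  refine squeeze_zero_norm' ?_ (tendsto_const_div_atTop_nhds_zero_nat C)
  filter_upwards [h, eventually_gt_atTop 0] with n hn hn0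
  have hn0 : (0 : ℝ) < n := by exact_mod_cast hn0
  rw [Real.norm_eq_abs, div_sub' hn0.ne', abs_div, abs_of_pos hn0, mul_comm]
  exact div_le_div_of_nonneg_right hn hn0.le

/-- Lemma C.4 (part): `pre(i)/i → 1/e`, where `pre(i)` is the largest `1 ≤ i' ≤ i`
with `∑_{ℓ=i'}^{i} 1/ℓ > 1`. -/
theorem stmt_10 (pre : ℕ → ℕ)
    (hpre : ∀ i : ℕ, 2 ≤ i →
      IsGreatest {i' : ℕ | 1 ≤ i' ∧ i' ≤ i ∧
        1 < ∑ ℓ ∈ Finset.Icc i' i, (1 : ℝ) / ℓ} (pre i)) :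
    Filter.Tendsto (fun i : ℕ => (pre i : ℝ) / i) Filter.atTop
      (nhds (Real.exp 1)⁻¹) := by
  simp only [one_div] at hpre
  refine tendsto_div_natCast_of_abs_sub_mul_le (C := 1) ?_
  filter_upwards [eventually_ge_atTop 2] with i hi
  simpa [div_eq_inv_mul] using abs_sub_div_exp_one_le_one_of_isGreatest (hpre i hi)
end

section
/- For each integer i ≥ 1, define suc(i) as the smallest integer i' ≥ i such that the sum of 1/ℓ over integers ℓ with i ≤ ℓ ≤ i' is strictly greater than 1. Then suc(i)/i converges to e as i → ∞. -/
/-!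
Comparing the sums with `∫ dx / x`, minimality and membership of `s = suc i` give
`log (s / i) ≤ ∑_{i ≤ ℓ < s} 1/ℓ ≤ 1 < ∑_{i ≤ ℓ ≤ s} 1/ℓ ≤ 1/i + log (s / i)`,
so `exp (1 - 1/i) < s / i ≤ e`, and the lower bound tends to `e`.
-/

open Finset Real Filter

lemma log_div_le_sum_Ico_inv {a b : ℕ} (ha : 0 < a) (hab : a ≤ b) :
    log (b / a) ≤ ∑ ℓ ∈ Ico a b, (ℓ : ℝ)⁻¹ := by
  have ha' : (0 : ℝ) < a := by exact_mod_cast ha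
  rw [← integral_inv_of_pos ha' (by exact_mod_cast ha.trans_le hab)]
  exact (inv_antitoneOn_Icc_right ha').integral_le_sum_Ico hab

lemma sum_Ioc_inv_le_log_div {a b : ℕ} (ha : 0 < a) (hab : a ≤ b) :
    ∑ ℓ ∈ Ioc a b, (ℓ : ℝ)⁻¹ ≤ log (b / a) := by
  have ha' : (0 : ℝ) < a := by exact_mod_cast ha
  rw [← integral_inv_of_pos ha' (by exact_mod_cast ha.trans_le hab),
    ← Ico_add_one_add_one_eq_Ioc, ← sum_Ico_add']
  exact (inv_antitoneOn_Icc_right ha').sum_le_integral_Ico hab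

/-- `suc i` of the paper is the least element of this set. -/
def sucCandidates (i : ℕ) : Set ℕ :=
  {j : ℕ | i ≤ j ∧ 1 < ∑ ℓ ∈ Icc i j, (1 : ℝ) / ℓ}

section Successor

variable {i s : ℕ}

lemma lt_of_mem_sucCandidates (hs : s ∈ sucCandidates i) : i < s := by
  obtain ⟨his, hsum⟩ := hs
  refine his.lt_of_ne ?_
  rintro rfl
  rw [Icc_self, sum_singleton, one_div] at hsum
  exact hsum.not_ge (Nat.cast_inv_le_one i)

lemma sum_Ico_le_one_of_isLeast (hs : IsLeast (sucCandidates i) s) :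
    ∑ ℓ ∈ Ico i s, (1 : ℝ) / ℓ ≤ 1 := by
  have his := lt_of_mem_sucCandidates hs.1
  rw [← Icc_sub_one_right_eq_Ico_of_not_isMin (by simpa using (i.zero_le.trans_lt his).ne')]
  by_contra! hsum
  have := hs.2 ⟨Nat.le_sub_one_of_lt his, hsum⟩
  omega

lemma exp_one_sub_inv_lt_div_of_mem_sucCandidates (hi : 0 < i) (hs : s ∈ sucCandidates i) :
    exp (1 - (i : ℝ)⁻¹) < s / i := by
  have his := lt_of_mem_sucCandidates hs
  have hs' : (0 : ℝ) < s := by exact_mod_cast hi.trans his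
  rw [← lt_log_iff_exp_lt (by positivity), sub_lt_iff_lt_add']
  calc 1 < ∑ ℓ ∈ Icc i s, (ℓ : ℝ)⁻¹ := by simpa only [one_div] using hs.2
    _ = (i : ℝ)⁻¹ + ∑ ℓ ∈ Ioc i s, (ℓ : ℝ)⁻¹ := (add_sum_Ioc_eq_sum_Icc his.le).symm
    _ ≤ (i : ℝ)⁻¹ + log (s / i) := by gcongr; exact sum_Ioc_inv_le_log_div hi his.le

lemma div_le_exp_one_of_isLeast (hi : 0 < i) (hs : IsLeast (sucCandidates i) s) :
    (s : ℝ) / i ≤ exp 1 := by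
  have his := lt_of_mem_sucCandidates hs.1
  have hs' : (0 : ℝ) < s := by exact_mod_cast hi.trans his
  rw [← log_le_iff_le_exp (by positivity)]
  calc log (s / i) ≤ ∑ ℓ ∈ Ico i s, (ℓ : ℝ)⁻¹ := log_div_le_sum_Ico_inv hi his.le
    _ ≤ 1 := by simpa only [one_div] using sum_Ico_le_one_of_isLeast hs

end Successor

/-- Lemma C.4 (part): `suc(i)/i → e`, where `suc(i)` is the smallest `i' ≥ i`
with `∑_{ℓ=i}^{i'} 1/ℓ > 1`. -/
theorem stmt_11 (suc : ℕ → ℕ)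
    (hsuc : ∀ i : ℕ, 1 ≤ i →
      IsLeast {i' : ℕ | i ≤ i' ∧
        1 < ∑ ℓ ∈ Finset.Icc i i', (1 : ℝ) / ℓ} (suc i)) :
    Filter.Tendsto (fun i : ℕ => (suc i : ℝ) / i) Filter.atTop
      (nhds (Real.exp 1)) := by
  have hlower : Tendsto (fun i : ℕ => exp (1 - (i : ℝ)⁻¹)) atTop (nhds (exp 1)) := by
    simpa using (tendsto_inv_atTop_nhds_zero_nat.const_sub 1).rexp
  refine tendsto_of_tendsto_of_tendsto_of_le_of_le' hlower tendsto_const_nhds ?_ ?_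
  · filter_upwards [eventually_ge_atTop 1] with i hi
    exact (exp_one_sub_inv_lt_div_of_mem_sucCandidates hi (hsuc i hi).1).le
  · filter_upwards [eventually_ge_atTop 1] with i hi
    exact div_le_exp_one_of_isLeast hi (hsuc i hi)
end

section
/- For each integer i ≥ 2, define pre(i) as the largest positive integer i' ≤ i such that Σ_{ℓ=i'}^{i} 1/ℓ > 1, and for each integer i ≥ 1, define suc(i) as the smallest integer i' ≥ i such that Σ_{ℓ=i}^{i'} 1/ℓ > 1. Then the limit superior, as i → ∞, of Σ_{i'=pre(i)+1}^{i} 1/suc(i') is at most 1/e. -/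
/-!
Comparing harmonic sums with `∫ dx / x`, minimality of `suc j` gives
`log (suc j) > log j + 1 - 1 / j`, i.e. `1 / suc j < e^(1/j - 1) / j`. For `j > pre i` the factor
`e^(1/j)` is at most `e^(1/(pre i + 1))`, and maximality of `pre i` bounds the harmonic sum over
`(pre i, i]` by `1`. Hence the sum is at most `e^(1/(pre i + 1) - 1)`, which tends to `1/e` because
`pre i → ∞`.
-/

open Finset Real Filter Topology

lemma integral_inv_natCast {a b : ℕ} (ha : 0 < a) (hab : a ≤ b) :
    ∫ x in (a : ℝ)..b, x⁻¹ = log b - log a := by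
  have ha' : (0 : ℝ) < a := by exact_mod_cast ha
  have hb' : (0 : ℝ) < b := by exact_mod_cast ha.trans_le hab
  rw [integral_inv (by simp [Set.uIcc_of_le (Nat.cast_le.2 hab), ha'.not_ge]),
    log_div hb'.ne' ha'.ne']

lemma log_sub_log_le_sum_Ico_inv {a b : ℕ} (ha : 0 < a) (hab : a ≤ b) :
    log b - log a ≤ ∑ ℓ ∈ Ico a b, (ℓ : ℝ)⁻¹ :=
  integral_inv_natCast ha hab ▸
    (inv_antitoneOn_Icc_right (by exact_mod_cast ha)).integral_le_sum_Ico hab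

lemma sum_Ioc_inv_le_log_sub_log {a b : ℕ} (ha : 0 < a) (hab : a ≤ b) :
    ∑ ℓ ∈ Ioc a b, (ℓ : ℝ)⁻¹ ≤ log b - log a := by
  rw [← integral_inv_natCast ha hab, ← Ico_add_one_add_one_eq_Ioc,
    ← sum_Ico_add' (fun ℓ : ℕ => (ℓ : ℝ)⁻¹)]
  exact_mod_cast (inv_antitoneOn_Icc_right (by exact_mod_cast ha)).sum_le_integral_Ico hab

lemma one_div_lt_exp_mul_one_div_of_one_lt_sum_Icc {j s : ℕ} (hj : 0 < j) (hjs : j ≤ s)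
    (h : 1 < ∑ ℓ ∈ Icc j s, (1 : ℝ) / ℓ) : (1 : ℝ) / s < exp (1 / j - 1) * (1 / j) := by
  have hj' : (0 : ℝ) < j := by exact_mod_cast hj
  have hs' : (0 : ℝ) < s := by exact_mod_cast hj.trans_le hjs
  have hlog : log j + (1 - 1 / j) < log s := by
    rw [Icc_eq_cons_Ioc hjs, sum_cons] at h
    simp only [one_div] at h ⊢
    linarith [sum_Ioc_inv_le_log_sub_log hj hjs]
  have hlt : j * exp (1 - 1 / j) < (s : ℝ) := by
    simpa [exp_add, exp_log hj', exp_log hs'] using exp_lt_exp.2 hlog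
  calc (1 : ℝ) / s < 1 / (j * exp (1 - 1 / j)) := one_div_lt_one_div_of_lt (by positivity) hlt
    _ = exp (1 / j - 1) * (1 / j) := by rw [← neg_sub, exp_neg]; field_simp

lemma one_lt_sum_Icc_one_div_of_three_mul_le {m i : ℕ} (hm : 0 < m) (hmi : 3 * m ≤ i) :
    1 < ∑ ℓ ∈ Icc m i, (1 : ℝ) / ℓ := by
  have hm' : (0 : ℝ) < m := by exact_mod_cast hm
  have h3m : (3 : ℝ) * m ≤ (i + 1 : ℕ) := by push_cast; exact_mod_cast hmi.trans (by omega)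
  calc (1 : ℝ) < log 3 := by rw [lt_log_iff_exp_lt (by norm_num)]; linarith [exp_one_lt_d9]
    _ = log (3 * m) - log m := by rw [log_mul (by norm_num) hm'.ne']; ring
    _ ≤ log (i + 1 : ℕ) - log m := by gcongr
    _ ≤ ∑ ℓ ∈ Icc m i, (1 : ℝ) / ℓ := by
      simpa only [one_div, Ico_add_one_right_eq_Icc] using
        log_sub_log_le_sum_Ico_inv hm (by omega : m ≤ i + 1)

lemma sum_Icc_add_one_one_div_le_one_of_isGreatest {i p : ℕ}
    (hp : IsGreatest {i' : ℕ | 1 ≤ i' ∧ i' ≤ i ∧ 1 < ∑ ℓ ∈ Icc i' i, (1 : ℝ) / ℓ} p) :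
    ∑ ℓ ∈ Icc (p + 1) i, (1 : ℝ) / ℓ ≤ 1 := by
  by_contra! hlt
  have hpi : p + 1 ≤ i := by
    by_contra! hip
    rw [Icc_eq_empty (by omega), sum_empty] at hlt
    linarith
  have := hp.2 ⟨by omega, hpi, hlt⟩
  omega

lemma tendsto_atTop_of_isGreatest {pre : ℕ → ℕ} (hpre : ∀ i : ℕ, 2 ≤ i →
      IsGreatest {i' : ℕ | 1 ≤ i' ∧ i' ≤ i ∧ 1 < ∑ ℓ ∈ Icc i' i, (1 : ℝ) / ℓ} (pre i)) :
    Tendsto pre atTop atTop := by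
  refine tendsto_atTop_atTop.2 fun m => ⟨3 * max m 1, fun i hi => ?_⟩
  have hk : 0 < max m 1 := by omega
  have hmem : max m 1 ≤ pre i := (hpre i (by omega)).2
    ⟨hk, by omega, one_lt_sum_Icc_one_div_of_three_mul_le hk hi⟩
  omega

lemma sum_Icc_one_div_le_exp_of_isLeast {suc : ℕ → ℕ} {p i : ℕ}
    (htail : ∑ ℓ ∈ Icc (p + 1) i, (1 : ℝ) / ℓ ≤ 1)
    (hsuc : ∀ j : ℕ, 1 ≤ j → IsLeast {s : ℕ | j ≤ s ∧ 1 < ∑ ℓ ∈ Icc j s, (1 : ℝ) / ℓ} (suc j)) :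
    ∑ j ∈ Icc (p + 1) i, (1 : ℝ) / suc j ≤ exp (1 / ((p : ℝ) + 1) - 1) := by
  calc ∑ j ∈ Icc (p + 1) i, (1 : ℝ) / suc j
      ≤ ∑ j ∈ Icc (p + 1) i, exp (1 / ((p : ℝ) + 1) - 1) * (1 / j) := by
        refine sum_le_sum fun j hj => ?_
        have hpj : p + 1 ≤ j := (mem_Icc.1 hj).1
        obtain ⟨hjs, hlt⟩ := (hsuc j (by omega)).1
        refine (one_div_lt_exp_mul_one_div_of_one_lt_sum_Icc (by omega) hjs hlt).le.trans ?_
        have : (p : ℝ) + 1 ≤ j := by exact_mod_cast hpj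
        gcongr
    _ = exp (1 / ((p : ℝ) + 1) - 1) * ∑ j ∈ Icc (p + 1) i, (1 : ℝ) / j := (mul_sum ..).symm
    _ ≤ exp (1 / ((p : ℝ) + 1) - 1) := mul_le_of_le_one_right (exp_pos _).le htail

/-- Lemma C.4 (part): `limsup_{i → ∞} ∑_{i'=pre(i)+1}^{i} 1/suc(i') ≤ 1/e`. -/
theorem stmt_12 (pre suc : ℕ → ℕ)
    (hpre : ∀ i : ℕ, 2 ≤ i →
      IsGreatest {i' : ℕ | 1 ≤ i' ∧ i' ≤ i ∧
        1 < ∑ ℓ ∈ Finset.Icc i' i, (1 : ℝ) / ℓ} (pre i))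
    (hsuc : ∀ i : ℕ, 1 ≤ i →
      IsLeast {i' : ℕ | i ≤ i' ∧
        1 < ∑ ℓ ∈ Finset.Icc i i', (1 : ℝ) / ℓ} (suc i)) :
    Filter.limsup
      (fun i : ℕ => ∑ i' ∈ Finset.Icc (pre i + 1) i, (1 : ℝ) / (suc i'))
      Filter.atTop ≤ (Real.exp 1)⁻¹ := by
  have hbound : ∀ᶠ i in atTop, ∑ i' ∈ Icc (pre i + 1) i, (1 : ℝ) / suc i'
      ≤ exp (1 / ((pre i : ℝ) + 1) - 1) :=
    eventually_atTop.2 ⟨2, fun i hi => sum_Icc_one_div_le_exp_of_isLeast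
      (sum_Icc_add_one_one_div_le_one_of_isGreatest (hpre i hi)) hsuc⟩
  have hlim : Tendsto (fun i => exp (1 / ((pre i : ℝ) + 1) - 1)) atTop (𝓝 (exp 1)⁻¹) := by
    have h := tendsto_atTop_add_const_right _ (1 : ℝ)
      (tendsto_natCast_atTop_atTop.comp (tendsto_atTop_of_isGreatest hpre))
    simpa [Function.comp_def, ← exp_neg] using
      (continuous_exp.tendsto _).comp (h.inv_tendsto_atTop.sub_const 1)
  calc limsup (fun i => ∑ i' ∈ Icc (pre i + 1) i, (1 : ℝ) / suc i') atTop
      ≤ limsup (fun i => exp (1 / ((pre i : ℝ) + 1) - 1)) atTop :=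
        limsup_le_limsup hbound
          (isCoboundedUnder_le_of_le atTop fun _ => sum_nonneg fun _ _ => by positivity)
          hlim.isBoundedUnder_le
    _ = (exp 1)⁻¹ := hlim.limsup_eq
end

section
/- Let K ≥ 1 be an integer and let π be a permutation of {1, …, K}. For i, j ∈ {1, …, K} define edge weights w_{ij} = 1/(K − i + 1) if π(j) ≥ i, and w_{ij} = 0 otherwise. Then the maximum of Σ_{i=1}^{K} w_{i,σ(i)} over all permutations σ of {1, …, K} equals Σ_{ℓ=1}^{K} 1/ℓ, and it is attained at σ = π^{-1}. -/
open Finset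

theorem sum_range_succ_eq_sum_Icc {M : Type*} [AddCommMonoid M] (f : ℕ → M) (n : ℕ) :
    ∑ i ∈ range n, f (i + 1) = ∑ i ∈ Icc 1 n, f i := by
  rw [range_eq_Ico, sum_Ico_add', zero_add, Ico_add_one_right_eq_Icc]

theorem sum_fin_one_div_natCast_sub (K : ℕ) :
    ∑ i : Fin K, (1 : ℝ) / ((K : ℝ) - (i : ℕ)) = ∑ ℓ ∈ Icc 1 K, (1 : ℝ) / ℓ := by
  rw [← Equiv.sum_comp Fin.revPerm, ← sum_range_succ_eq_sum_Icc,
    ← Fin.sum_univ_eq_sum_range (fun i => (1 : ℝ) / ((i + 1 : ℕ) : ℝ))]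
  refine sum_congr rfl fun i _ => ?_
  rw [Fin.revPerm_apply, Fin.val_rev, Nat.cast_sub (by omega)]
  push_cast
  ring_nf

-- Online node `i : Fin K` stands for node `i + 1` of the paper, so its weight `1/(K - i + 1)`
-- reads `1/(K - i)` here.
theorem stmt_13_general (K : ℕ) (π : Equiv.Perm (Fin K)) :
    (∀ σ : Equiv.Perm (Fin K),
      ∑ i : Fin K, (if i ≤ π (σ i) then (1 : ℝ) / ((K : ℝ) - (i : ℕ)) else 0)
        ≤ ∑ ℓ ∈ Finset.Icc 1 K, (1 : ℝ) / ℓ) ∧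
    ∑ i : Fin K, (if i ≤ π (π.symm i) then (1 : ℝ) / ((K : ℝ) - (i : ℕ)) else 0)
      = ∑ ℓ ∈ Finset.Icc 1 K, (1 : ℝ) / ℓ := by
  rw [← sum_fin_one_div_natCast_sub]
  refine ⟨fun σ => sum_le_sum fun i _ => ?_, ?_⟩
  · split_ifs
    exacts [le_rfl, one_div_nonneg.mpr (sub_pos.mpr (Nat.cast_lt.mpr i.isLt)).le]
  · simp only [Equiv.apply_symm_apply, le_refl, if_true]

/-- Lemma C.1: in the lower-bound instance with weights `w_{ij} = 1/(K-i+1)` when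
`π(j) ≥ i` and `0` otherwise (indices in `{1,…,K}`, encoded via `Fin K`, so online node
`i : Fin K` stands for `i+1` and `1/(K-i+1)` becomes `1/(K - i.val)`), the maximum
weight of a perfect matching equals the harmonic number `∑_{ℓ=1}^{K} 1/ℓ` and is
attained at `σ = π⁻¹`. -/
theorem stmt_13 (K : ℕ) (hK : 1 ≤ K) (π : Equiv.Perm (Fin K)) :
    (∀ σ : Equiv.Perm (Fin K),
      ∑ i : Fin K, (if i ≤ π (σ i) then (1 : ℝ) / ((K : ℝ) - (i : ℕ)) else 0)
        ≤ ∑ ℓ ∈ Finset.Icc 1 K, (1 : ℝ) / ℓ) ∧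
    ∑ i : Fin K, (if i ≤ π (π.symm i) then (1 : ℝ) / ((K : ℝ) - (i : ℕ)) else 0)
      = ∑ ℓ ∈ Finset.Icc 1 K, (1 : ℝ) / ℓ :=
  stmt_13_general K π
end

section
/- Let f > 0 and let Γ be a real number with 1 < Γ < 1 + 2f + 2·√(f(1 + f)). Then every sequence z : ℕ → ℝ with z(0) > 0 satisfying the recurrence z(n + 2) = (Γ + 1)·z(n + 1) − Γ·(1 + f)·z(n) for all n ≥ 0 has some term z(n) < 0. In particular, there exists no such sequence all of whose terms are nonnegative. -/
/-!
With `a = Γ + 1` and `b = Γ(1 + f)`, the bounds on `Γ` say exactly that `a² < 4b`, i.e. the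
characteristic polynomial `x² - a x + b` has no real root. If a solution of
`z (n + 2) = a z (n + 1) - b z n` stayed nonnegative it would stay positive, and its ratios
`tₙ = z (n + 1) / z n` would obey `tₙ₊₁ = a - b / tₙ = tₙ - (tₙ² - a tₙ + b) / tₙ`. Since
`t² - a t + b ≥ b - a² / 4 > 0`, the ratios decrease by at least a fixed amount at each step,
so they eventually become negative.
-/

lemma exists_nonpos_of_le_sub_div {t : ℕ → ℝ} {δ : ℝ} (hδ : 0 < δ)
    (hstep : ∀ n, t (n + 1) ≤ t n - δ / t n) : ∃ n, t n ≤ 0 := by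
  by_contra! hpos
  have hanti : Antitone t :=
    antitone_nat_of_succ_le fun n => (hstep n).trans (sub_le_self _ (div_pos hδ (hpos n)).le)
  set d := δ / t 0
  have hd : 0 < d := div_pos hδ (hpos 0)
  have hlin : ∀ n : ℕ, t n ≤ t 0 - n * d := by
    intro n
    induction n with
    | zero => simp
    | succ n ih =>
      have : d ≤ δ / t n := div_le_div_of_nonneg_left hδ.le (hpos n) (hanti n.zero_le)
      push_cast
      linarith [hstep n]
  obtain ⟨N, hN⟩ := exists_nat_gt (t 0 / d)
  have : t 0 < N * d := (div_lt_iff₀ hd).mp hN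
  linarith [hlin N, hpos N]

lemma sub_div_le_sub_div {a b t : ℝ} (ht : 0 < t) :
    a - b / t ≤ t - (b - a ^ 2 / 4) / t := by
  rw [← sub_nonneg]
  have : t - (b - a ^ 2 / 4) / t - (a - b / t) = (t - a / 2) ^ 2 / t := by
    field_simp
    ring
  rw [this]
  positivity

section LinearRecurrence

variable {a b : ℝ} {z : ℕ → ℝ}

lemma pos_of_nonneg_of_rec (hb : 0 < b) (hrec : ∀ n, z (n + 2) = a * z (n + 1) - b * z n)
    (hz0 : 0 < z 0) (hnn : ∀ n, 0 ≤ z n) (n : ℕ) : 0 < z n := by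
  induction n with
  | zero => exact hz0
  | succ n ih =>
    refine (hnn (n + 1)).lt_of_ne fun hzero => ?_
    have : z (n + 2) < 0 := by rw [hrec n, ← hzero]; nlinarith
    linarith [hnn (n + 2)]

lemma div_eq_sub_div_div_of_rec (hrec : ∀ n, z (n + 2) = a * z (n + 1) - b * z n) {n : ℕ}
    (hn1 : z (n + 1) ≠ 0) :
    z (n + 2) / z (n + 1) = a - b / (z (n + 1) / z n) := by
  rw [hrec n]
  field_simp

theorem exists_neg_of_sq_lt (hab : a ^ 2 < 4 * b)
    (hrec : ∀ n, z (n + 2) = a * z (n + 1) - b * z n) (hz0 : 0 < z 0) : ∃ n, z n < 0 := by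
  by_contra! hnn
  have hb : 0 < b := by nlinarith [sq_nonneg a]
  have hpos := pos_of_nonneg_of_rec hb hrec hz0 hnn
  have hstep : ∀ n, z (n + 1 + 1) / z (n + 1) ≤
      z (n + 1) / z n - (b - a ^ 2 / 4) / (z (n + 1) / z n) := fun n => by
    rw [div_eq_sub_div_div_of_rec hrec (hpos (n + 1)).ne']
    exact sub_div_le_sub_div (div_pos (hpos (n + 1)) (hpos n))
  obtain ⟨n, hn⟩ := exists_nonpos_of_le_sub_div (t := fun n => z (n + 1) / z n)
    (by linarith) hstep
  exact hn.not_gt (div_pos (hpos (n + 1)) (hpos n))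

end LinearRecurrence

lemma sq_add_one_lt_four_mul {f Γ : ℝ} (hf : 0 < f) (hΓ1 : 1 < Γ)
    (hΓ2 : Γ < 1 + 2 * f + 2 * Real.sqrt (f * (1 + f))) :
    (Γ + 1) ^ 2 < 4 * (Γ * (1 + f)) := by
  set s := Real.sqrt (f * (1 + f))
  have hs : s ^ 2 = f * (1 + f) := Real.sq_sqrt (by positivity)
  have hfs : f < s := by nlinarith [Real.sqrt_nonneg (f * (1 + f))]
  -- `(Γ + 1)² - 4Γ(1 + f) = (Γ - 1 - 2f)² - 4s²`, and `|Γ - 1 - 2f| < 2s`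
  nlinarith [mul_pos (by linarith : 0 < 2 * s - (Γ - 1 - 2 * f))
    (by linarith : 0 < 2 * s + (Γ - 1 - 2 * f))]

/-- Core of Theorem E.2: for `f > 0` and `1 < Γ < 1 + 2f + 2√(f(1+f))`, every real
sequence with `z 0 > 0` satisfying `z(n+2) = (Γ+1)z(n+1) - Γ(1+f)z(n)` has a negative
term; in particular no such sequence is everywhere nonnegative. -/
theorem stmt_15 (f Γ : ℝ) (hf : 0 < f) (hΓ1 : 1 < Γ)
    (hΓ2 : Γ < 1 + 2 * f + 2 * Real.sqrt (f * (1 + f))) :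
    (∀ z : ℕ → ℝ, 0 < z 0 →
      (∀ n : ℕ, z (n + 2) = (Γ + 1) * z (n + 1) - Γ * (1 + f) * z n) →
      ∃ n : ℕ, z n < 0) ∧
    ¬ ∃ z : ℕ → ℝ, 0 < z 0 ∧
      (∀ n : ℕ, z (n + 2) = (Γ + 1) * z (n + 1) - Γ * (1 + f) * z n) ∧
      (∀ n : ℕ, 0 ≤ z n) := by
  have hdisc := sq_add_one_lt_four_mul hf hΓ1 hΓ2
  have hneg : ∀ z : ℕ → ℝ, 0 < z 0 →
      (∀ n : ℕ, z (n + 2) = (Γ + 1) * z (n + 1) - Γ * (1 + f) * z n) →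
      ∃ n : ℕ, z n < 0 :=
    fun z hz0 hrec => exists_neg_of_sq_lt hdisc hrec hz0
  refine ⟨hneg, fun ⟨z, hz0, hrec, hnn⟩ => ?_⟩
  obtain ⟨n, hn⟩ := hneg z hz0 hrec
  exact (hnn n).not_gt hn
end

section
/- Let f be a real number with 0 ≤ f < 1/3 and let Γ be a real number with 1 + 2f + 2·√(f(1 + f)) < Γ < 2/(1 − f). Define the sequence z : ℕ → ℝ by z(0) = 1, z(1) = Γ − 1, and z(n + 2) = (Γ + 1)·z(n + 1) − Γ·(1 + f)·z(n) for all n ≥ 0. Then there exists n with z(n) < 0. -/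
/-!
Let `r₁ > r₂ > 0` be the roots of `x² - (Γ + 1) x + Γ (1 + f)`; they are real and distinct
because `Γ` exceeds the larger root `1 + 2f + 2√(f(1+f))` of the discriminant. The recurrence
gives `z (n + 1) - r₂ z n = r₁ⁿ (Γ - 1 - r₂)`, and `Γ - 1 < r₂` is equivalent to
`Γ (1 - f) < 2`, since the quadratic takes the value `2 - Γ (1 - f)` at `Γ - 1`. So if `z`
stayed nonnegative we would get `z n ≤ r₂ⁿ z 0` and then `0 ≤ r₂ⁿ⁺¹ z 0 + r₁ⁿ (Γ - 1 - r₂)`,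
which fails for large `n` because `r₂ < r₁`.
-/

open Filter Topology

theorem sub_mul_eq_pow_mul_of_linear_recurrence {R : Type*} [CommRing R] {a b : R} {z : ℕ → R}
    (hrec : ∀ n, z (n + 2) = (a + b) * z (n + 1) - a * b * z n) (n : ℕ) :
    z (n + 1) - b * z n = a ^ n * (z 1 - b * z 0) := by
  induction n with
  | zero => simp
  | succ n ih =>
    calc z (n + 2) - b * z (n + 1) = a * (z (n + 1) - b * z n) := by rw [hrec]; ring
      _ = a ^ (n + 1) * (z 1 - b * z 0) := by rw [ih]; ring

theorem exists_neg_of_sub_mul_eq_pow_mul {a b d : ℝ} {z : ℕ → ℝ} (hb : 0 < b) (hba : b < a)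
    (hd : d < 0) (h : ∀ n, z (n + 1) - b * z n = a ^ n * d) : ∃ n, z n < 0 := by
  by_contra! hz
  have ha : 0 < a := hb.trans hba
  have hle : ∀ n, z n ≤ b ^ n * z 0 := by
    intro n
    induction n with
    | zero => simp
    | succ n ih =>
      have : a ^ n * d < 0 := mul_neg_of_pos_of_neg (pow_pos ha n) hd
      calc z (n + 1) ≤ b * z n := by linarith [h n]
        _ ≤ b * (b ^ n * z 0) := by gcongr
        _ = b ^ (n + 1) * z 0 := by ring
  have hbound : ∀ n, -d ≤ b * z 0 * (b / a) ^ n := by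
    intro n
    have hzn : 0 ≤ b * (b ^ n * z 0) + a ^ n * d := by
      linarith [hz (n + 1), h n, mul_le_mul_of_nonneg_left (hle n) hb.le]
    rw [div_pow, ← mul_div_assoc, le_div_iff₀ (pow_pos ha n)]
    linarith
  have hlim : Tendsto (fun n => b * z 0 * (b / a) ^ n) atTop (𝓝 0) := by
    simpa using (tendsto_pow_atTop_nhds_zero_of_lt_one (div_pos hb ha).le
      ((div_lt_one ha).mpr hba)).const_mul (b * z 0)
  obtain ⟨n, hn⟩ := (hlim.eventually (eventually_lt_nhds (neg_pos.mpr hd))).exists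
  exact (hbound n).not_gt hn

theorem exists_distinct_pos_roots {p q : ℝ} (hp : 0 < p) (hq : 0 < q) (hdisc : 4 * q < p ^ 2) :
    ∃ a b : ℝ, 0 < b ∧ b < a ∧ a + b = p ∧ a * b = q := by
  set s := Real.sqrt (p ^ 2 - 4 * q)
  have hs : 0 < s := Real.sqrt_pos.mpr (by linarith)
  have hs2 : s ^ 2 = p ^ 2 - 4 * q := Real.sq_sqrt (by linarith)
  refine ⟨(p + s) / 2, (p - s) / 2, ?_, by linarith, by ring, by linear_combination hs2 / (-4)⟩
  nlinarith

theorem four_mul_mul_lt_sq_of_lt {f Γ : ℝ} (hf : 0 ≤ f)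
    (hΓ : 1 + 2 * f + 2 * Real.sqrt (f * (1 + f)) < Γ) :
    4 * (Γ * (1 + f)) < (Γ + 1) ^ 2 := by
  have ht := Real.sqrt_nonneg (f * (1 + f))
  have ht2 := Real.sq_sqrt (by positivity : 0 ≤ f * (1 + f))
  nlinarith

/-- Core of Theorem E.4: for `0 ≤ f < 1/3` and
`1 + 2f + 2√(f(1+f)) < Γ < 2/(1-f)`, the sequence with `z 0 = 1`, `z 1 = Γ - 1` and
`z(n+2) = (Γ+1)z(n+1) - Γ(1+f)z(n)` has a negative term. -/
theorem stmt_16 (f Γ : ℝ) (hf0 : 0 ≤ f) (hf1 : f < 1 / 3)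
    (hΓ1 : 1 + 2 * f + 2 * Real.sqrt (f * (1 + f)) < Γ) (hΓ2 : Γ < 2 / (1 - f))
    (z : ℕ → ℝ) (hz0 : z 0 = 1) (hz1 : z 1 = Γ - 1)
    (hrec : ∀ n : ℕ, z (n + 2) = (Γ + 1) * z (n + 1) - Γ * (1 + f) * z n) :
    ∃ n : ℕ, z n < 0 := by
  have hΓf : Γ * (1 - f) < 2 := (lt_div_iff₀ (by linarith)).mp hΓ2
  have hΓ_lt_three : Γ < 3 := by nlinarith
  have hΓ_gt_one : 1 < Γ := by linarith [Real.sqrt_nonneg (f * (1 + f))]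
  obtain ⟨a, b, hb, hba, hsum, hprod⟩ :=
    exists_distinct_pos_roots (by linarith) (by positivity) (four_mul_mul_lt_sq_of_lt hf0 hΓ1)
  have hΓb : Γ - 1 < b := by
    have hpos : 0 < (Γ - 1 - a) * (Γ - 1 - b) := by
      linear_combination hΓf + (Γ - 1) * hsum - hprod
    linarith [neg_of_mul_pos_right hpos (by linarith)]
  refine exists_neg_of_sub_mul_eq_pow_mul hb hba (sub_neg.mpr hΓb) fun n => ?_
  rw [sub_mul_eq_pow_mul_of_linear_recurrence (a := a) (fun n => by rw [hrec, hsum, hprod]) n,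
    hz0, hz1, mul_one]
end
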